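/- Let λ = σ_S''(R) + β·σ_S'(R) where σ_S(r) = [β/(β + R·P₀(R))]·(R^{1/2}/r^{1/2})·I_{1/2}(r)/I_{1/2}(R). Then λ = [β·P₀(R)/(β + R·P₀(R))]·[R²·P₁(R) + 1 + β·R], where P_n(ξ) = I_{n+3/2}(ξ)/(ξ·I_{n+1/2}(ξ)). -/

import Mathlib

/-! With φₙ(r) = r^{-1/2} I_{n+1/2}(r), the function σ_S is c·φ₀ for the constant
c = β/(β + R P₀(R)) · R^{1/2} / I_{1/2}(R). The rule I_ν' = I_{ν+1} + (ν/x) I_ν, proved by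
induction along the recurrence that defines the half-integer orders, gives φₙ' = φₙ₊₁ + (n/r) φₙ,
hence σ_S' = c φ₁ and σ_S'' = c (φ₂ + φ₁/r). At r = R the ratios φ₁/φ₀ = R P₀(R) and
φ₂/φ₁ = R P₁(R) turn σ_S''(R) + β σ_S'(R) into the stated expression. -/

/-- `sbI k x = I_{k - 1/2}(x)`, the modified Bessel function of the first kind of
half-integer order, defined from the elementary closed forms
`I_{-1/2}(x) = √(2/(πx)) cosh x`, `I_{1/2}(x) = √(2/(πx)) sinh x` and the recurrence
`I_{ν+1}(x) = I_{ν-1}(x) - (2ν/x) I_ν(x)`. -/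
noncomputable def sbI : ℕ → ℝ → ℝ
  | 0, x => Real.sqrt (2 / (Real.pi * x)) * Real.cosh x
  | 1, x => Real.sqrt (2 / (Real.pi * x)) * Real.sinh x
  | (k + 2), x => sbI k x - ((2 * (k : ℝ) + 1) / x) * sbI (k + 1) x

/-- `besselIhalf n x = I_{n+1/2}(x)`. -/
noncomputable def besselIhalf (n : ℕ) (x : ℝ) : ℝ := sbI (n + 1) x

/-- `P n ξ = I_{n+3/2}(ξ) / (ξ · I_{n+1/2}(ξ))`. -/
noncomputable def P (n : ℕ) (ξ : ℝ) : ℝ := besselIhalf (n + 1) ξ / (ξ * besselIhalf n ξ)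


/-- The radially symmetric stationary nutrient concentration
`σ_S(r) = [β/(β+R·P₀(R))]·(R^{1/2}/r^{1/2})·I_{1/2}(r)/I_{1/2}(R)`. -/
noncomputable def sigS (R β : ℝ) (r : ℝ) : ℝ :=
  β / (β + R * P 0 R) * (Real.sqrt R / Real.sqrt r) * (besselIhalf 0 r / besselIhalf 0 R)

open Real Topology

theorem hasDerivAt_sqrt_two_div_pi_mul {x : ℝ} (hx : 0 < x) :
    HasDerivAt (fun x => √(2 / (π * x))) (-(√(2 / (π * x)) / (2 * x))) x := by
  have hpos : 0 < 2 / (π * x) := by positivity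
  have hinner := (hasDerivAt_const x (2 : ℝ)).div ((hasDerivAt_id' x).const_mul π) (by positivity)
  refine (hinner.sqrt hpos.ne').congr_deriv ?_
  have hs : √(2 / (π * x)) ≠ 0 := by positivity
  simp only [Pi.div_apply]
  field_simp
  rw [sq_sqrt hpos.le]
  field_simp
  ring

theorem hasDerivAt_sbI : ∀ (k : ℕ) {x : ℝ}, 0 < x →
    HasDerivAt (sbI k) (sbI (k + 1) x + ((k - 1 / 2) / x) * sbI k x) x
  | 0, x, hx => by
    refine ((hasDerivAt_sqrt_two_div_pi_mul hx).mul (hasDerivAt_cosh x)).congr_deriv ?_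
    simp only [sbI]
    ring
  | 1, x, hx => by
    refine ((hasDerivAt_sqrt_two_div_pi_mul hx).mul (hasDerivAt_sinh x)).congr_deriv ?_
    simp only [sbI]
    field_simp
    ring
  | k + 2, x, hx => by
    have hc := (hasDerivAt_inv hx.ne').const_mul (2 * (k : ℝ) + 1)
    have h := (hasDerivAt_sbI k hx).sub (hc.mul (hasDerivAt_sbI (k + 1) hx))
    refine (h.congr_of_eventuallyEq (Filter.Eventually.of_forall fun y => ?_)).congr_deriv ?_
    · simp only [sbI, Pi.sub_apply, Pi.mul_apply]; ring
    · simp only [sbI]; push_cast; field_simp; ring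

theorem hasDerivAt_besselIhalf_div_sqrt (n : ℕ) {x : ℝ} (hx : 0 < x) :
    HasDerivAt (fun r => besselIhalf n r / √r)
      ((besselIhalf (n + 1) x + (n / x) * besselIhalf n x) / √x) x := by
  have h := (hasDerivAt_sbI (n + 1) hx).div (hasDerivAt_sqrt hx.ne') (by positivity)
  refine h.congr_deriv ?_
  simp only [besselIhalf]
  have hs : √x ≠ 0 := by positivity
  field_simp
  rw [sq_sqrt hx.le]
  push_cast
  ring

theorem sinh_lt_mul_cosh {x : ℝ} (hx : 0 < x) : sinh x < x * cosh x := by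
  have hmono : StrictMonoOn (fun y => y * cosh y - sinh y) (Set.Ici 0) := by
    refine strictMonoOn_of_deriv_pos (convex_Ici 0) (by fun_prop) fun y hy => ?_
    rw [interior_Ici] at hy
    have hd : HasDerivAt (fun y => y * cosh y - sinh y) (y * sinh y) y :=
      (((hasDerivAt_id' y).mul (hasDerivAt_cosh y)).sub (hasDerivAt_sinh y)).congr_deriv (by ring)
    rw [hd.deriv]
    exact mul_pos hy (sinh_pos_iff.2 hy)
  simpa using hmono Set.self_mem_Ici hx.le hx

theorem besselIhalf_zero_pos {x : ℝ} (hx : 0 < x) : 0 < besselIhalf 0 x := by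
  have : 0 < sinh x := sinh_pos_iff.2 hx
  simp only [besselIhalf, sbI]
  positivity

theorem besselIhalf_one_pos {x : ℝ} (hx : 0 < x) : 0 < besselIhalf 1 x := by
  have h : besselIhalf 1 x = √(2 / (π * x)) * ((x * cosh x - sinh x) / x) := by
    simp only [besselIhalf, sbI]
    field_simp
    ring
  have : 0 < x * cosh x - sinh x := sub_pos.2 (sinh_lt_mul_cosh hx)
  rw [h]
  positivity

theorem besselIhalf_succ_eq_mul_P (n : ℕ) {x : ℝ} (hx : x ≠ 0) (hn : besselIhalf n x ≠ 0) :
    besselIhalf (n + 1) x = x * besselIhalf n x * P n x := by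
  rw [P]
  field_simp

theorem sigS_eq (R β : ℝ) :
    sigS R β = fun r => β / (β + R * P 0 R) * √R / besselIhalf 0 R * (besselIhalf 0 r / √r) := by
  funext r
  rw [sigS]
  ring

theorem stmt17_general (R β : ℝ) (hR : 0 < R) :
    deriv (deriv (sigS R β)) R + β * deriv (sigS R β) R =
      (β * P 0 R / (β + R * P 0 R)) * (R ^ 2 * P 1 R + 1 + β * R) := by
  set c := β / (β + R * P 0 R) * √R / besselIhalf 0 R
  have hd1 : ∀ r, 0 < r → HasDerivAt (sigS R β) (c * (besselIhalf 1 r / √r)) r := fun r hr => by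
    simpa [sigS_eq] using (hasDerivAt_besselIhalf_div_sqrt 0 hr).const_mul c
  have hderiv_eq : deriv (sigS R β) =ᶠ[𝓝 R] fun r => c * (besselIhalf 1 r / √r) := by
    filter_upwards [Ioi_mem_nhds hR] with r hr using (hd1 r hr).deriv
  have hd2 := ((hasDerivAt_besselIhalf_div_sqrt 1 hR).const_mul c).congr_of_eventuallyEq
    hderiv_eq
  have hB0 := (besselIhalf_zero_pos hR).ne'
  rw [hd2.deriv, (hd1 R hR).deriv, besselIhalf_succ_eq_mul_P 1 hR.ne' (besselIhalf_one_pos hR).ne',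
    besselIhalf_succ_eq_mul_P 0 hR.ne' hB0, mul_div_right_comm β]
  have hs : √R ≠ 0 := by positivity
  simp only [c]
  field_simp
  ring

/-- `λ = σ_S''(R) + β·σ_S'(R)` equals
`[β·P₀(R)/(β + R·P₀(R))]·[R²·P₁(R) + 1 + β·R]`. -/
theorem stmt17 (R β : ℝ) (hR : 0 < R) (hβ : 0 < β) :
    deriv (deriv (sigS R β)) R + β * deriv (sigS R β) R =
      (β * P 0 R / (β + R * P 0 R)) * (R ^ 2 * P 1 R + 1 + β * R) :=
  stmt17_general R β hR
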